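/- arXiv:1404.2459 — 2 statements merged into one kernel-verified Lean document; each statement's English description precedes it below -/
import Mathlib

section
/- Let A₁, A₂ ∈ ℝ, h₁, h₂ > 0; let u be a nonnegative grid function and let Λ₁⁺, Λ₁⁻, Λ₂⁺, Λ₂⁻ ∈ [0, 2]. If Δτ satisfies Δτ ≤ h₁h₂/(2(|A₁|h₂ + |A₂|h₁)), then the quantity f = u_{i,j}/Δτ + A₁⁺Λ₁⁺(u_{i+1,j} − u_{i,j})/h₁ − A₁⁻Λ₁⁻(u_{i,j} − u_{i−1,j})/h₁ + A₂⁺Λ₂⁺(u_{i,j+1} − u_{i,j})/h₂ − A₂⁻Λ₂⁻(u_{i,j} − u_{i,j−1})/h₂ is nonnegative, where A⁺ = max(0, A), A⁻ = max(0, −A). -/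
/-!
Each upwind difference can lower the right-hand side by at most `2 |A| u_{i,j} / h`: the
neighbouring values enter with nonnegative weights and the limiters are at most `2`. The CFL
bound on `Δτ` says exactly that these losses in both directions add up to at most `u_{i,j} / Δτ`.
-/

open Set

lemma neg_two_mul_le_upwind_difference {a b Λp Λm u up um : ℝ} (ha : 0 ≤ a) (hb : 0 ≤ b)
    (hΛp : Λp ∈ Icc (0 : ℝ) 2) (hΛm : Λm ∈ Icc (0 : ℝ) 2)
    (hu : 0 ≤ u) (hup : 0 ≤ up) (hum : 0 ≤ um) :
    -(2 * (a + b) * u) ≤ a * Λp * (up - u) - b * Λm * (u - um) := by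
  have hup_weighted : 0 ≤ a * Λp * up := by have := hΛp.1; positivity
  have hum_weighted : 0 ≤ b * Λm * um := by have := hΛm.1; positivity
  have hΛp_le : a * Λp * u ≤ a * 2 * u := by gcongr; exact hΛp.2
  have hΛm_le : b * Λm * u ≤ b * 2 * u := by gcongr; exact hΛm.2
  linarith

lemma neg_le_upwind_flux {A h Λp Λm u up um : ℝ} (hh : 0 < h)
    (hΛp : Λp ∈ Icc (0 : ℝ) 2) (hΛm : Λm ∈ Icc (0 : ℝ) 2)
    (hu : 0 ≤ u) (hup : 0 ≤ up) (hum : 0 ≤ um) :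
    -(2 * |A| / h * u) ≤ max 0 A * Λp * (up - u) / h - max 0 (-A) * Λm * (u - um) / h := by
  have hdiff := neg_two_mul_le_upwind_difference (le_max_left 0 A) (le_max_left 0 (-A))
    hΛp hΛm hu hup hum
  have habs : max 0 A + max 0 (-A) = |A| := by
    rw [max_comm, max_comm 0, max_zero_add_max_neg_zero_eq_abs_self]
  rw [habs] at hdiff
  rw [← sub_div, div_mul_eq_mul_div, ← neg_div]
  exact div_le_div_of_nonneg_right hdiff hh.le

lemma cfl_rate_le_inv {A₁ A₂ h₁ h₂ Δτ : ℝ} (hh₁ : 0 < h₁) (hh₂ : 0 < h₂) (hΔτ : 0 < Δτ)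
    (hbound : Δτ ≤ h₁ * h₂ / (2 * (|A₁| * h₂ + |A₂| * h₁))) :
    2 * |A₁| / h₁ + 2 * |A₂| / h₂ ≤ 1 / Δτ := by
  have hprod := mul_le_of_le_div₀ (by positivity) (by positivity) hbound
  rw [div_add_div _ _ hh₁.ne' hh₂.ne', div_le_div_iff₀ (by positivity) hΔτ]
  linarith

theorem explicit_rhs_nonneg_general (A₁ A₂ h₁ h₂ Δτ Λ₁p Λ₁m Λ₂p Λ₂m : ℝ)
    (uij uipj uimj uijp uijm : ℝ)
    (hh₁ : 0 < h₁) (hh₂ : 0 < h₂)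
    (hu : 0 ≤ uij) (hu1 : 0 ≤ uipj) (hu2 : 0 ≤ uimj) (hu3 : 0 ≤ uijp) (hu4 : 0 ≤ uijm)
    (hΛ₁p : Λ₁p ∈ Set.Icc (0 : ℝ) 2) (hΛ₁m : Λ₁m ∈ Set.Icc (0 : ℝ) 2)
    (hΛ₂p : Λ₂p ∈ Set.Icc (0 : ℝ) 2) (hΛ₂m : Λ₂m ∈ Set.Icc (0 : ℝ) 2)
    (hΔτ : 0 < Δτ) (hbound : Δτ ≤ h₁ * h₂ / (2 * (|A₁| * h₂ + |A₂| * h₁))) :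
    0 ≤ uij / Δτ + max 0 A₁ * Λ₁p * (uipj - uij) / h₁
      - max 0 (-A₁) * Λ₁m * (uij - uimj) / h₁
      + max 0 A₂ * Λ₂p * (uijp - uij) / h₂
      - max 0 (-A₂) * Λ₂m * (uij - uijm) / h₂ := by
  have flux₁ := neg_le_upwind_flux (A := A₁) hh₁ hΛ₁p hΛ₁m hu hu1 hu2
  have flux₂ := neg_le_upwind_flux (A := A₂) hh₂ hΛ₂p hΛ₂m hu hu3 hu4
  have cfl := mul_le_mul_of_nonneg_right (cfl_rate_le_inv hh₁ hh₂ hΔτ hbound) hu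
  rw [add_mul, one_div_mul_eq_div] at cfl
  linarith

theorem explicit_rhs_nonneg (A₁ A₂ h₁ h₂ Δτ Λ₁p Λ₁m Λ₂p Λ₂m : ℝ)
    (uij uipj uimj uijp uijm : ℝ)
    (hh₁ : 0 < h₁) (hh₂ : 0 < h₂)
    (hu : 0 ≤ uij) (hu1 : 0 ≤ uipj) (hu2 : 0 ≤ uimj) (hu3 : 0 ≤ uijp) (hu4 : 0 ≤ uijm)
    (hΛ₁p : Λ₁p ∈ Set.Icc (0 : ℝ) 2) (hΛ₁m : Λ₁m ∈ Set.Icc (0 : ℝ) 2)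
    (hΛ₂p : Λ₂p ∈ Set.Icc (0 : ℝ) 2) (hΛ₂m : Λ₂m ∈ Set.Icc (0 : ℝ) 2)
    (hA : 0 < |A₁| + |A₂|)
    (hΔτ : 0 < Δτ) (hbound : Δτ ≤ h₁ * h₂ / (2 * (|A₁| * h₂ + |A₂| * h₁))) :
    0 ≤ uij / Δτ + max 0 A₁ * Λ₁p * (uipj - uij) / h₁
      - max 0 (-A₁) * Λ₁m * (uij - uimj) / h₁
      + max 0 A₂ * Λ₂p * (uijp - uij) / h₂
      - max 0 (-A₂) * Λ₂m * (uij - uijm) / h₂ :=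
  explicit_rhs_nonneg_general A₁ A₂ h₁ h₂ Δτ Λ₁p Λ₁m Λ₂p Λ₂m uij uipj uimj uijp uijm hh₁ hh₂ hu hu1
    hu2 hu3 hu4 hΛ₁p hΛ₁m hΛ₂p hΛ₂m hΔτ hbound
end

section
/- Let M be an n×n real matrix that is strictly diagonally dominant with positive diagonal entries and nonpositive off-diagonal entries. Then M is invertible and M⁻¹ has all entries nonnegative; consequently, if F ≥ 0 componentwise and M·U = F, then U ≥ 0 componentwise. -/
/-!
Let `U` have a negative entry and take `j` where `U` is smallest. Since the off-diagonal entries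
of row `j` are nonpositive, `(M U)_j ≤ (∑_p M_jp) U_j`, and the row sum is positive by diagonal
dominance, so `(M U)_j < 0`. Hence `M U ≥ 0` forces `U ≥ 0`; applied to the columns of `M⁻¹`
(for which `M U` is a standard basis vector) this gives `M⁻¹ ≥ 0`. Invertibility is Gershgorin.
-/

open Matrix

namespace Matrix

variable {ι K : Type*} [Fintype ι] [Field K] [LinearOrder K] [IsStrictOrderedRing K]

theorem mulVec_apply_le_sum_row_mul_of_isMin {M : Matrix ι ι K}
    (hoff : ∀ k p, k ≠ p → M k p ≤ 0) {U : ι → K} {j : ι} (hj : ∀ p, U j ≤ U p) :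
    (M *ᵥ U) j ≤ (∑ p, M j p) * U j := by
  rw [mulVec, dotProduct, Finset.sum_mul]
  refine Finset.sum_le_sum fun p _ => ?_
  rcases eq_or_ne j p with rfl | hjp
  · rfl
  · exact mul_le_mul_of_nonpos_left (hj p) (hoff j p hjp)

theorem nonneg_of_mulVec_nonneg {M : Matrix ι ι K}
    (hoff : ∀ k p, k ≠ p → M k p ≤ 0) (hrow : ∀ k, 0 < ∑ p, M k p)
    {U : ι → K} (hU : ∀ i, 0 ≤ (M *ᵥ U) i) (i : ι) : 0 ≤ U i := by
  by_contra! hneg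
  obtain ⟨j, -, hj⟩ := Finset.exists_min_image Finset.univ U ⟨i, Finset.mem_univ i⟩
  have hUj : U j < 0 := (hj i (Finset.mem_univ i)).trans_lt hneg
  have hle := mulVec_apply_le_sum_row_mul_of_isMin hoff (fun p => hj p (Finset.mem_univ p))
  linarith [hU j, mul_neg_of_pos_of_neg (hrow j) hUj]

theorem nonsing_inv_nonneg [DecidableEq ι] {M : Matrix ι ι K} (hM : IsUnit M)
    (hoff : ∀ k p, k ≠ p → M k p ≤ 0) (hrow : ∀ k, 0 < ∑ p, M k p) (k p : ι) :
    0 ≤ M⁻¹ k p := by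
  have hcol : M *ᵥ (M⁻¹ *ᵥ Pi.single p 1) = Pi.single p 1 := by
    rw [mulVec_mulVec, mul_nonsing_inv M ((isUnit_iff_isUnit_det M).mp hM), one_mulVec]
  have hnonneg := nonneg_of_mulVec_nonneg hoff hrow (U := M⁻¹ *ᵥ Pi.single p 1)
    (by rw [hcol]; exact Pi.single_nonneg.mpr zero_le_one) k
  rwa [mulVec_single_one] at hnonneg

theorem sum_row_pos_of_diagDominant [DecidableEq ι] {M : Matrix ι ι K}
    (hdiag : ∀ k, 0 < M k k) (hoff : ∀ k p, k ≠ p → M k p ≤ 0)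
    (hdd : ∀ k, ∑ p ∈ Finset.univ.erase k, |M k p| < |M k k|) (k : ι) :
    0 < ∑ p, M k p := by
  have habs : ∑ p ∈ Finset.univ.erase k, |M k p| = -∑ p ∈ Finset.univ.erase k, M k p := by
    rw [← Finset.sum_neg_distrib]
    exact Finset.sum_congr rfl fun p hp => abs_of_nonpos (hoff k p (Finset.ne_of_mem_erase hp).symm)
  have := hdd k
  rw [habs, abs_of_pos (hdiag k)] at this
  rw [← Finset.add_sum_erase _ _ (Finset.mem_univ k)]
  linarith

end Matrix

theorem M_matrix_inverse_nonneg {n : ℕ} (M : Matrix (Fin n) (Fin n) ℝ)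
    (hdiag : ∀ k, 0 < M k k)
    (hoff : ∀ k p, k ≠ p → M k p ≤ 0)
    (hdd : ∀ k, ∑ p ∈ Finset.univ.erase k, |M k p| < |M k k|) :
    IsUnit M ∧ (∀ k p, 0 ≤ M⁻¹ k p) ∧
    ∀ F U : Fin n → ℝ, (∀ i, 0 ≤ F i) → M.mulVec U = F → ∀ i, 0 ≤ U i := by
  have hrow := sum_row_pos_of_diagDominant hdiag hoff hdd
  have hunit : IsUnit M := (isUnit_iff_isUnit_det M).mpr <| isUnit_iff_ne_zero.mpr <|
    det_ne_zero_of_sum_row_lt_diag (by simpa only [Real.norm_eq_abs] using hdd)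
  refine ⟨hunit, nonsing_inv_nonneg hunit hoff hrow, fun F U hF hMU => ?_⟩
  exact nonneg_of_mulVec_nonneg hoff hrow (by rw [hMU]; exact hF)
end
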